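/- Let d ≥ 1, T > 0, let V : ℝ^d → ℝ be C² and ℤ^d-periodic, let α > 0 and let ψ : ℝ → ℝ be a nonnegative C¹ ℤ-periodic function with ∫_{[0,1)} ψ = 1; set φ = α + ψ. For a probability measure μ on ℝ^d define b_φ(μ, x) = (∫ φ(x − z¹) ∂₁V(z) dμ(z)) / (∫ φ(x − z¹) dμ(z)) for x ∈ ℝ (the denominator is ≥ α). Suppose X and Y are two continuous adapted processes on the same filtered probability space, driven by the same standard d-dimensional Brownian motion W, with X₀ = Y₀ almost surely, such that almost surely X_t = X₀ + ∫₀ᵗ (−∇V(X_s) + b_φ(μ_s, X_s¹) e₁) ds + √2 W_t and Y_t = Y₀ + ∫₀ᵗ (−∇V(Y_s) + b_φ(ν_s, Y_s¹) e₁) ds + √2 W_t for all t ∈ [0,T], where μ_s and ν_s denote the laws of X_s and Y_s respectively. Then almost surely X_t = Y_t for all t ∈ [0,T]. -/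

import Mathlib

/-!
The drift `b(μ, x) = -∇V(x) + b_φ(μ, x¹) e₁` is bounded and Lipschitz jointly in the point and
the law, in the coupling form `‖b(Law X, x) - b(Law Y, y)‖ ≤ C (‖x - y‖ + E‖X - Y‖)`: periodicity
bounds the derivatives of `V` and `φ`, and the denominator of the Nadaraya–Watson ratio is at
least `α`. Since both solutions are driven by the same noise, `X - Y` solves a random ODE, so
`u(t) = E‖X_t - Y_t‖` satisfies `u(t) ≤ 2C ∫₀ᵗ u`, and Grönwall gives `u = 0`. Continuity of the
paths upgrades equality at each fixed time to equality of whole paths.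
-/

open MeasureTheory ProbabilityTheory

/-- The centered Gaussian distribution on `ℝ^d` with covariance matrix `v·Id`. -/
noncomputable def stdGaussian (d : ℕ) (v : ℝ) :
    Measure (EuclideanSpace ℝ (Fin d)) :=
  (Measure.pi fun _ : Fin d => gaussianReal 0 v.toNNReal).map
    (MeasurableEquiv.toLp 2 (Fin d → ℝ))

/-- A standard `d`-dimensional Brownian motion on a filtered probability space. -/
structure IsStdBrownian {Ω : Type*} [m : MeasurableSpace Ω] (P : Measure Ω)
    (F : Filtration ℝ m) {d : ℕ} (W : ℝ → Ω → EuclideanSpace ℝ (Fin d)) : Prop where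
  adapted : Adapted F W
  cont : ∀ ω, Continuous fun t => W t ω
  start : ∀ ω, W 0 ω = 0
  indep : ∀ s t : ℝ, 0 ≤ s → s ≤ t →
      Indep (MeasurableSpace.comap (fun ω => W t ω - W s ω) inferInstance) (F s) P
  law : ∀ s t : ℝ, 0 ≤ s → s ≤ t →
      P.map (fun ω => W t ω - W s ω) = stdGaussian d (t - s)

/-- The regularized (Nadaraya–Watson) biasing drift
`b_φ(μ, x) = (∫ φ(x - z¹) ∂₁V(z) dμ(z)) / (∫ φ(x - z¹) dμ(z))`. -/
noncomputable def nwDrift {d : ℕ} (hd : 0 < d) (V : EuclideanSpace ℝ (Fin d) → ℝ)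
    (φ : ℝ → ℝ) (μ : Measure (EuclideanSpace ℝ (Fin d))) (x : ℝ) : ℝ :=
  (∫ z, φ (x - z ⟨0, hd⟩) * fderiv ℝ V z (EuclideanSpace.single ⟨0, hd⟩ (1:ℝ)) ∂μ) /
    ∫ z, φ (x - z ⟨0, hd⟩) ∂μ

open Set Filter Topology
open scoped NNReal

section Periodic

variable {d : ℕ} {G : Type*} [NormedAddCommGroup G]

def IsLatticePeriodic (f : EuclideanSpace ℝ (Fin d) → G) : Prop :=
  ∀ (x : EuclideanSpace ℝ (Fin d)) (q : Fin d → ℤ),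
    f (x + WithLp.toLp 2 (fun i => (q i : ℝ))) = f x

theorem IsLatticePeriodic.fderiv [NormedSpace ℝ G] {f : EuclideanSpace ℝ (Fin d) → G}
    (hf : IsLatticePeriodic f) : IsLatticePeriodic (fderiv ℝ f) := fun x q => by
  rw [← fderiv_comp_add_right, funext fun y => hf y q]

theorem IsLatticePeriodic.exists_norm_le {f : EuclideanSpace ℝ (Fin d) → G}
    (hf : IsLatticePeriodic f) (hc : Continuous f) : ∃ C, ∀ x, ‖f x‖ ≤ C := by
  have hK : IsCompact (WithLp.toLp 2 '' univ.pi fun _ : Fin d => Icc (0 : ℝ) 1) :=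
    (isCompact_univ_pi fun _ => isCompact_Icc).image (PiLp.continuous_toLp 2 _)
  obtain ⟨C, hC⟩ := hK.exists_bound_of_continuousOn hc.continuousOn
  refine ⟨C, fun x => ?_⟩
  have hx : x = WithLp.toLp 2 (fun i => Int.fract (x i)) +
      WithLp.toLp 2 (fun i => ((⌊x i⌋ : ℤ) : ℝ)) := by
    ext i; simp [Int.fract_add_floor]
  rw [hx, hf]
  exact hC _ ⟨_, fun i _ => ⟨Int.fract_nonneg _, (Int.fract_lt_one _).le⟩, rfl⟩

theorem IsLatticePeriodic.exists_lipschitzWith [NormedSpace ℝ G]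
    {f : EuclideanSpace ℝ (Fin d) → G} (hf : IsLatticePeriodic f) (hc : ContDiff ℝ 1 f) :
    ∃ K, LipschitzWith K f := by
  obtain ⟨C, hC⟩ := hf.fderiv.exists_norm_le (hc.continuous_fderiv one_ne_zero)
  exact ⟨C.toNNReal, lipschitzWith_of_nnnorm_fderiv_le (hc.differentiable one_ne_zero)
    fun x => by rw [← NNReal.coe_le_coe, coe_nnnorm]; exact (hC x).trans (Real.le_coe_toNNReal C)⟩

theorem Function.Periodic.exists_le_of_continuous {f : ℝ → ℝ} {c : ℝ} (hp : f.Periodic c)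
    (hc : c ≠ 0) (hf : Continuous f) : ∃ M, ∀ x, f x ≤ M := by
  obtain ⟨M, hM⟩ := (hp.isBounded_of_continuous hc hf).exists_norm_le
  exact ⟨M, fun x => (le_abs_self _).trans (hM _ ⟨x, rfl⟩)⟩

theorem Function.Periodic.exists_lipschitzWith {f : ℝ → ℝ} {c : ℝ} (hp : f.Periodic c)
    (hc : c ≠ 0) (hf : ContDiff ℝ 1 f) : ∃ K, LipschitzWith K f := by
  have hp' : (deriv f).Periodic c := fun x => by
    rw [← deriv_comp_add_const, funext hp]
  obtain ⟨C, hC⟩ :=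
    (hp'.isBounded_of_continuous hc (hf.continuous_deriv le_rfl)).exists_norm_le
  exact ⟨C.toNNReal, lipschitzWith_of_nnnorm_deriv_le (hf.differentiable one_ne_zero)
    fun x => by
      rw [← NNReal.coe_le_coe, coe_nnnorm]; exact (hC _ ⟨x, rfl⟩).trans (Real.le_coe_toNNReal C)⟩

end Periodic

theorem abs_div_sub_div_le {N₁ N₂ D₁ D₂ α G : ℝ} (hα : 0 < α) (hD₁ : α ≤ D₁) (hD₂ : 0 < D₂)
    (hG : |N₂ / D₂| ≤ G) : |N₁ / D₁ - N₂ / D₂| ≤ (|N₁ - N₂| + G * |D₁ - D₂|) / α := by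
  have hD₁' : 0 < D₁ := hα.trans_le hD₁
  have key : N₁ / D₁ - N₂ / D₂ = ((N₁ - N₂) - N₂ / D₂ * (D₁ - D₂)) / D₁ := by
    field_simp; ring
  rw [key, abs_div, abs_of_pos hD₁']
  have hG0 : 0 ≤ G := (abs_nonneg _).trans hG
  calc |N₁ - N₂ - N₂ / D₂ * (D₁ - D₂)| / D₁
      ≤ (|N₁ - N₂| + G * |D₁ - D₂|) / D₁ := by
        gcongr
        calc _ ≤ |N₁ - N₂| + |N₂ / D₂ * (D₁ - D₂)| := abs_sub _ _
          _ ≤ _ := by rw [abs_mul]; gcongr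
    _ ≤ (|N₁ - N₂| + G * |D₁ - D₂|) / α := by gcongr

section Integral

variable {Ω : Type*} [MeasurableSpace Ω] {P : Measure Ω}

theorem abs_integral_sub_integral_le [IsProbabilityMeasure P] {F₁ F₂ H : Ω → ℝ} {L c : ℝ}
    (hF₁ : Integrable F₁ P) (hF₂ : Integrable F₂ P) (hH : Integrable H P)
    (h : ∀ ω, |F₁ ω - F₂ ω| ≤ L * (c + H ω)) :
    |∫ ω, F₁ ω ∂P - ∫ ω, F₂ ω ∂P| ≤ L * (c + ∫ ω, H ω ∂P) := by
  rw [← integral_sub hF₁ hF₂]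
  calc |∫ ω, F₁ ω - F₂ ω ∂P| ≤ ∫ ω, |F₁ ω - F₂ ω| ∂P := abs_integral_le_integral_abs
    _ ≤ ∫ ω, L * (c + H ω) ∂P :=
        integral_mono (hF₁.sub hF₂).abs (((integrable_const c).add hH).const_mul L) h
    _ = L * (c + ∫ ω, H ω ∂P) := by
        rw [integral_const_mul, integral_add (integrable_const c) hH]; simp

theorem abs_integral_mul_div_integral_le {w g : Ω → ℝ} {G : ℝ} (hw : Integrable w P)
    (hw0 : ∀ ω, 0 ≤ w ω) (hpos : 0 < ∫ ω, w ω ∂P) (hg : AEStronglyMeasurable g P)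
    (hG : ∀ ω, |g ω| ≤ G) : |(∫ ω, w ω * g ω ∂P) / ∫ ω, w ω ∂P| ≤ G := by
  rw [abs_div, abs_of_pos hpos, div_le_iff₀ hpos, ← integral_const_mul]
  refine abs_integral_le_integral_abs.trans (integral_mono ?_ (hw.const_mul G) fun ω => ?_)
  · exact (hw.bdd_mul hg (ae_of_all _ hG)).abs.congr (ae_of_all _ fun ω => by simp [mul_comm])
  · rw [abs_mul, abs_of_nonneg (hw0 ω), mul_comm]; exact mul_le_mul_of_nonneg_right (hG ω) (hw0 ω)

end Integral

section NadarayaWatson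

variable {E : Type*} [NormedAddCommGroup E] {φ : ℝ → ℝ} {π g : E → ℝ} {α M G : ℝ}
  {Kφ Kg : ℝ≥0}

theorem abs_kernel_sub_le (hφ : LipschitzWith Kφ φ) (hπ : LipschitzWith 1 π) (a b : ℝ)
    (z w : E) : |φ (a - π z) - φ (b - π w)| ≤ Kφ * (|a - b| + ‖z - w‖) := by
  have hπzw : |π z - π w| ≤ ‖z - w‖ := by
    simpa [← Real.dist_eq, ← dist_eq_norm] using hπ.dist_le_mul z w
  calc |φ (a - π z) - φ (b - π w)| ≤ Kφ * |a - π z - (b - π w)| := by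
        simpa [← Real.dist_eq] using hφ.dist_le_mul (a - π z) (b - π w)
    _ ≤ Kφ * (|a - b| + ‖z - w‖) := by
        gcongr
        calc |a - π z - (b - π w)| = |(a - b) - (π z - π w)| := by ring_nf
          _ ≤ |a - b| + |π z - π w| := abs_sub _ _
          _ ≤ |a - b| + ‖z - w‖ := by gcongr

theorem abs_kernel_mul_sub_le (hφ : LipschitzWith Kφ φ) (hπ : LipschitzWith 1 π)
    (hg : LipschitzWith Kg g) (hα : 0 < α) (hφα : ∀ r, α ≤ φ r) (hφM : ∀ r, φ r ≤ M)
    (hgG : ∀ z, |g z| ≤ G) (a b : ℝ) (z w : E) :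
    |φ (a - π z) * g z - φ (b - π w) * g w| ≤ (G * Kφ + M * Kg) * (|a - b| + ‖z - w‖) := by
  have hφ0 : ∀ r, 0 ≤ φ r := fun r => hα.le.trans (hφα r)
  have hM : 0 ≤ M := (hφ0 0).trans (hφM 0)
  have hG : 0 ≤ G := (abs_nonneg _).trans (hgG z)
  have hgd : |g z - g w| ≤ Kg * ‖z - w‖ := by
    simpa [← Real.dist_eq, ← dist_eq_norm] using hg.dist_le_mul z w
  calc |φ (a - π z) * g z - φ (b - π w) * g w|
      = |g z * (φ (a - π z) - φ (b - π w)) + (g z - g w) * φ (b - π w)| := by ring_nf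
    _ ≤ G * (Kφ * (|a - b| + ‖z - w‖)) + Kg * ‖z - w‖ * M := by
      refine (abs_add_le _ _).trans (add_le_add ?_ ?_) <;> rw [abs_mul]
      · exact mul_le_mul (hgG _) (abs_kernel_sub_le hφ hπ a b z w) (abs_nonneg _) hG
      · exact mul_le_mul hgd ((abs_of_nonneg (hφ0 _)).trans_le (hφM _)) (abs_nonneg _)
          (by positivity)
    _ ≤ (G * Kφ + M * Kg) * (|a - b| + ‖z - w‖) := by
      nlinarith [mul_nonneg (mul_nonneg hM Kg.coe_nonneg) (abs_nonneg (a - b))]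

variable [MeasurableSpace E] [OpensMeasurableSpace E] {Ω : Type*} [MeasurableSpace Ω]
  {P : Measure Ω}

noncomputable def nwAverage (φ : ℝ → ℝ) (π g : E → ℝ) (μ : Measure E) (a : ℝ) : ℝ :=
  (∫ z, φ (a - π z) * g z ∂μ) / ∫ z, φ (a - π z) ∂μ

theorem nwAverage_map (hφ : Continuous φ) (hπ : Continuous π) (hg : Continuous g)
    {X : Ω → E} (hX : Measurable X) (a : ℝ) :
    nwAverage φ π g (P.map X) a =
      (∫ ω, φ (a - π (X ω)) * g (X ω) ∂P) / ∫ ω, φ (a - π (X ω)) ∂P := by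
  have hw : Continuous fun z => φ (a - π z) := hφ.comp (continuous_const.sub hπ)
  rw [nwAverage, integral_map (f := fun z => φ (a - π z) * g z) hX.aemeasurable
    (hw.mul hg).aestronglyMeasurable, integral_map hX.aemeasurable hw.aestronglyMeasurable]

theorem integrable_kernel_comp [IsFiniteMeasure P] (hφ : Continuous φ) (hπ : Continuous π)
    (hα : 0 < α) (hφα : ∀ r, α ≤ φ r) (hφM : ∀ r, φ r ≤ M) {X : Ω → E} (hX : Measurable X)
    (a : ℝ) : Integrable (fun ω => φ (a - π (X ω))) P :=
  .of_bound (hφ.measurable.comp (measurable_const.sub (hπ.measurable.comp hX))).aestronglyMeasurable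
    M (ae_of_all _ fun ω => abs_le.2 ⟨by linarith [hφα (a - π (X ω)), hφM (a - π (X ω))], hφM _⟩)

theorem le_integral_kernel_comp [IsProbabilityMeasure P] (hφ : Continuous φ)
    (hπ : Continuous π) (hα : 0 < α) (hφα : ∀ r, α ≤ φ r) (hφM : ∀ r, φ r ≤ M) {X : Ω → E}
    (hX : Measurable X) (a : ℝ) : α ≤ ∫ ω, φ (a - π (X ω)) ∂P := by
  simpa using integral_mono (integrable_const (μ := P) α)
    (integrable_kernel_comp hφ hπ hα hφα hφM hX a) fun ω => hφα _

theorem abs_nwAverage_le (μ : Measure E) [IsProbabilityMeasure μ] (hφ : Continuous φ)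
    (hπ : Continuous π) (hg : Continuous g) (hα : 0 < α) (hφα : ∀ r, α ≤ φ r)
    (hφM : ∀ r, φ r ≤ M) (hgG : ∀ z, |g z| ≤ G) (a : ℝ) : |nwAverage φ π g μ a| ≤ G :=
  abs_integral_mul_div_integral_le (integrable_kernel_comp hφ hπ hα hφα hφM measurable_id a)
    (fun _ => hα.le.trans (hφα _))
    (hα.trans_le (le_integral_kernel_comp hφ hπ hα hφα hφM measurable_id a))
    hg.aestronglyMeasurable hgG

theorem abs_nwAverage_map_sub_le [IsProbabilityMeasure P] (hφ : LipschitzWith Kφ φ)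
    (hπ : LipschitzWith 1 π) (hg : LipschitzWith Kg g) (hα : 0 < α) (hφα : ∀ r, α ≤ φ r)
    (hφM : ∀ r, φ r ≤ M) (hgG : ∀ z, |g z| ≤ G) {X Y : Ω → E} (hX : Measurable X)
    (hY : Measurable Y) (hXY : Integrable (fun ω => ‖X ω - Y ω‖) P) (a b : ℝ) :
    |nwAverage φ π g (P.map X) a - nwAverage φ π g (P.map Y) b| ≤
      (2 * G * Kφ + M * Kg) / α * (|a - b| + ∫ ω, ‖X ω - Y ω‖ ∂P) := by
  have hgX : Measurable fun ω => g (X ω) := hg.continuous.measurable.comp hX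
  have hgY : Measurable fun ω => g (Y ω) := hg.continuous.measurable.comp hY
  have hwX := integrable_kernel_comp (P := P) hφ.continuous hπ.continuous hα hφα hφM hX a
  have hwY := integrable_kernel_comp (P := P) hφ.continuous hπ.continuous hα hφα hφM hY b
  have hNX : Integrable (fun ω => φ (a - π (X ω)) * g (X ω)) P := by
    simpa only [mul_comm] using hwX.bdd_mul hgX.aestronglyMeasurable (ae_of_all _ (hgG <| X ·))
  have hNY : Integrable (fun ω => φ (b - π (Y ω)) * g (Y ω)) P := by
    simpa only [mul_comm] using hwY.bdd_mul hgY.aestronglyMeasurable (ae_of_all _ (hgG <| Y ·))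
  have hN : |∫ ω, φ (a - π (X ω)) * g (X ω) ∂P - ∫ ω, φ (b - π (Y ω)) * g (Y ω) ∂P| ≤
      (G * Kφ + M * Kg) * (|a - b| + ∫ ω, ‖X ω - Y ω‖ ∂P) :=
    abs_integral_sub_integral_le hNX hNY hXY fun ω =>
      abs_kernel_mul_sub_le hφ hπ hg hα hφα hφM hgG a b (X ω) (Y ω)
  have hD : |∫ ω, φ (a - π (X ω)) ∂P - ∫ ω, φ (b - π (Y ω)) ∂P| ≤
      Kφ * (|a - b| + ∫ ω, ‖X ω - Y ω‖ ∂P) :=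
    abs_integral_sub_integral_le hwX hwY hXY fun ω => abs_kernel_sub_le hφ hπ a b (X ω) (Y ω)
  have := Measure.isProbabilityMeasure_map (μ := P) hY.aemeasurable
  have hratio := abs_nwAverage_le (P.map Y)
    hφ.continuous hπ.continuous hg.continuous hα hφα hφM hgG b
  rw [nwAverage_map hφ.continuous hπ.continuous hg.continuous hY] at hratio
  rw [nwAverage_map hφ.continuous hπ.continuous hg.continuous hX,
    nwAverage_map hφ.continuous hπ.continuous hg.continuous hY]
  refine (abs_div_sub_div_le hα
    (le_integral_kernel_comp hφ.continuous hπ.continuous hα hφα hφM hX a)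
    (hα.trans_le (le_integral_kernel_comp hφ.continuous hπ.continuous hα hφα hφM hY b))
    hratio).trans ?_
  have hG : 0 ≤ G := (abs_nonneg _).trans (hgG 0)
  calc _ ≤ ((G * Kφ + M * Kg) * (|a - b| + ∫ ω, ‖X ω - Y ω‖ ∂P) +
        G * (Kφ * (|a - b| + ∫ ω, ‖X ω - Y ω‖ ∂P))) / α := by gcongr
    _ = _ := by ring

theorem continuous_nwAverage_map [IsProbabilityMeasure P] (hφ : Continuous φ) (hπ : Continuous π)
    (hg : Continuous g) (hα : 0 < α) (hφα : ∀ r, α ≤ φ r) (hφM : ∀ r, φ r ≤ M)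
    (hgG : ∀ z, |g z| ≤ G) {X : ℝ → Ω → E} (hXm : ∀ s, Measurable (X s))
    (hXc : ∀ ω, Continuous fun s => X s ω) {c : ℝ → ℝ} (hc : Continuous c) :
    Continuous fun s => nwAverage φ π g (P.map (X s)) (c s) := by
  simp_rw [nwAverage_map hφ hπ hg (hXm _)]
  have hw : ∀ ω, Continuous fun s => φ (c s - π (X s ω)) :=
    fun ω => hφ.comp (hc.sub (hπ.comp (hXc ω)))
  have hwm : ∀ s, Measurable fun ω => φ (c s - π (X s ω)) :=
    fun s => hφ.measurable.comp (measurable_const.sub (hπ.measurable.comp (hXm s)))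
  have hφ_le : ∀ r, ‖φ r‖ ≤ M := fun r => abs_le.2 ⟨by linarith [hφα r, hφM r], hφM r⟩
  refine .div ?_ ?_ fun s => (hα.trans_le
    (le_integral_kernel_comp hφ hπ hα hφα hφM (hXm s) (c s))).ne'
  · refine continuous_of_dominated (bound := fun _ => M * G)
      (fun s => ((hwm s).mul (hg.measurable.comp (hXm s))).aestronglyMeasurable)
      (fun s => ae_of_all _ fun ω => ?_) (integrable_const _)
      (ae_of_all _ fun ω => (hw ω).mul (hg.comp (hXc ω)))
    rw [norm_mul]
    exact mul_le_mul (hφ_le _) (hgG _) (norm_nonneg _) ((norm_nonneg _).trans (hφ_le 0))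
  · exact continuous_of_dominated (fun s => (hwm s).aestronglyMeasurable)
      (fun s => ae_of_all _ fun ω => hφ_le _) (integrable_const M) (ae_of_all _ hw)

end NadarayaWatson

theorem eq_zero_of_le_mul_intervalIntegral {u : ℝ → ℝ} {K T : ℝ} (hu : Continuous u)
    (hu0 : ∀ t ∈ Icc 0 T, 0 ≤ u t) (hle : ∀ t ∈ Icc 0 T, u t ≤ K * ∫ s in 0..t, u s) :
    ∀ t ∈ Icc 0 T, u t = 0 := by
  have hU : ∀ t, HasDerivAt (fun x => ∫ s in 0..x, u s) (u t) t := fun t =>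
    intervalIntegral.integral_hasDerivAt_right (hu.intervalIntegrable _ _)
      (hu.stronglyMeasurableAtFilter _ _) hu.continuousAt
  have hU0 : ∀ t ∈ Icc 0 T, (∫ s in 0..t, u s) = 0 := by
    refine eq_zero_of_abs_deriv_le_mul_abs_self_of_eq_zero_right (K := |K|)
      (fun t _ => (hU t).continuousAt.continuousWithinAt) (fun t _ => (hU t).hasDerivWithinAt)
      intervalIntegral.integral_same fun t ht => ?_
    have ht' : t ∈ Icc 0 T := Ico_subset_Icc_self ht
    rw [Real.norm_eq_abs, Real.norm_eq_abs, abs_of_nonneg (hu0 t ht'), ← abs_mul]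
    exact (hle t ht').trans (le_abs_self _)
  intro t ht
  exact le_antisymm (by simpa [hU0 t ht] using hle t ht) (hu0 t ht)

section Processes

variable {Ω : Type*} [MeasurableSpace Ω] {P : Measure Ω}

theorem ae_forall_Icc_eq_of_forall_ae_eq {E : Type*} [TopologicalSpace E] [T2Space E]
    {X Y : ℝ → Ω → E} (hX : ∀ ω, Continuous fun t => X t ω) (hY : ∀ ω, Continuous fun t => Y t ω)
    {a b : ℝ} (hab : a ≤ b) (h : ∀ t ∈ Icc a b, ∀ᵐ ω ∂P, X t ω = Y t ω) :
    ∀ᵐ ω ∂P, ∀ t ∈ Icc a b, X t ω = Y t ω := by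
  have hq : ∀ᵐ ω ∂P, ∀ q : ℚ, X (projIcc a b hab q) ω = Y (projIcc a b hab q) ω :=
    ae_all_iff.2 fun q => h _ (projIcc a b hab q).2
  filter_upwards [hq] with ω hω t ht
  have hproj : Continuous fun s => (projIcc a b hab s : ℝ) :=
    continuous_subtype_val.comp continuous_projIcc
  have := Continuous.ext_on Rat.denseRange_cast ((hX ω).comp hproj) ((hY ω).comp hproj)
    (by rintro _ ⟨q, rfl⟩; exact hω q)
  simpa [projIcc_of_mem hab ht] using congrFun this t

theorem integral_le_intervalIntegral_integral [IsFiniteMeasure P] {f : Ω → ℝ}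
    {H : ℝ → Ω → ℝ} {K a b : ℝ} (hab : a ≤ b) (hf : Integrable f P)
    (hHm : ∀ s, Measurable (H s)) (hHc : ∀ ω, Continuous fun s => H s ω)
    (hHK : ∀ s ω, |H s ω| ≤ K) (hle : ∀ᵐ ω ∂P, f ω ≤ ∫ s in a..b, H s ω) :
    ∫ ω, f ω ∂P ≤ ∫ s in a..b, ∫ ω, H s ω ∂P := by
  have hint : Integrable (Function.uncurry H) ((volume.restrict (Ioc a b)).prod P) :=
    .of_bound (measurable_uncurry_of_continuous_of_measurable hHc hHm).aestronglyMeasurable K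
      (ae_of_all _ fun p => hHK p.1 p.2)
  rw [intervalIntegral_integral_swap (by rwa [uIoc_of_le hab])]
  refine integral_mono_ae hf ?_ hle
  simpa only [intervalIntegral.integral_of_le hab, Function.uncurry_apply_pair]
    using hint.integral_prod_right

theorem ae_eq_zero_of_le_intervalIntegral_mean [IsProbabilityMeasure P] {Z : ℝ → Ω → ℝ}
    {C R T : ℝ} (hZm : ∀ s, Measurable (Z s)) (hZc : ∀ ω, Continuous fun s => Z s ω)
    (hZ0 : ∀ s ω, 0 ≤ Z s ω) (hZR : ∀ s ω, Z s ω ≤ R)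
    (hle : ∀ᵐ ω ∂P, ∀ t ∈ Icc 0 T, Z t ω ≤ ∫ s in 0..t, C * (Z s ω + ∫ ω', Z s ω' ∂P)) :
    ∀ t ∈ Icc 0 T, ∀ᵐ ω ∂P, Z t ω = 0 := by
  have hZ_le : ∀ s ω, ‖Z s ω‖ ≤ R := fun s ω => by
    rw [Real.norm_eq_abs, abs_of_nonneg (hZ0 s ω)]; exact hZR s ω
  have hZi : ∀ s, Integrable (Z s) P := fun s =>
    .of_bound (hZm s).aestronglyMeasurable R (ae_of_all _ (hZ_le s))
  set u := fun s => ∫ ω, Z s ω ∂P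
  have hu : Continuous u := continuous_of_dominated (fun s => (hZm s).aestronglyMeasurable)
    (fun s => ae_of_all _ (hZ_le s)) (integrable_const R) (ae_of_all _ hZc)
  have hu0 : ∀ s, 0 ≤ u s := fun s => integral_nonneg (hZ0 s)
  have huR : ∀ s, u s ≤ R := fun s => by
    simpa using integral_mono (hZi s) (integrable_const R) (hZR s)
  have hmean : ∀ t ∈ Icc 0 T, u t ≤ 2 * C * ∫ s in 0..t, u s := fun t ht =>
    calc u t ≤ ∫ s in 0..t, ∫ ω, C * (Z s ω + u s) ∂P := by
          refine integral_le_intervalIntegral_integral (K := |C| * (R + R)) ht.1 (hZi t)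
            (fun s => ((hZm s).add_const _).const_mul C)
            (fun ω => continuous_const.mul ((hZc ω).add hu)) (fun s ω => ?_)
            (hle.mono fun ω h => h t ht)
          rw [abs_mul, abs_of_nonneg (add_nonneg (hZ0 s ω) (hu0 s))]
          gcongr
          exacts [hZR s ω, huR s]
      _ = ∫ s in 0..t, 2 * C * u s := by
          congr 1; ext s
          rw [integral_const_mul, integral_add (hZi s) (integrable_const _), integral_const]
          simp only [probReal_univ, one_smul, u]; ring
      _ = 2 * C * ∫ s in 0..t, u s := intervalIntegral.integral_const_mul _ _
  intro t ht
  exact (integral_eq_zero_iff_of_nonneg (hZ0 t) (hZi t)).1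
    (eq_zero_of_le_mul_intervalIntegral hu (fun t _ => hu0 t) hmean t ht)

variable {E : Type*} [NormedAddCommGroup E] [NormedSpace ℝ E]

theorem ae_sub_eq_intervalIntegral_sub {T : ℝ} {X Y N f g : ℝ → Ω → E}
    (hf : ∀ ω, Continuous fun s => f s ω) (hg : ∀ ω, Continuous fun s => g s ω)
    (hinit : ∀ᵐ ω ∂P, X 0 ω = Y 0 ω)
    (hX : ∀ᵐ ω ∂P, ∀ t ∈ Icc 0 T, X t ω = X 0 ω + (∫ s in 0..t, f s ω) + N t ω)
    (hY : ∀ᵐ ω ∂P, ∀ t ∈ Icc 0 T, Y t ω = Y 0 ω + (∫ s in 0..t, g s ω) + N t ω) :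
    ∀ᵐ ω ∂P, ∀ t ∈ Icc 0 T, X t ω - Y t ω = ∫ s in 0..t, (f s ω - g s ω) := by
  filter_upwards [hinit, hX, hY] with ω h0 hXω hYω t ht
  rw [intervalIntegral.integral_sub ((hf ω).intervalIntegrable _ _)
    ((hg ω).intervalIntegrable _ _), hXω t ht, hYω t ht, h0]
  abel

theorem ae_norm_sub_le_of_sub_eq_intervalIntegral {T K : ℝ} {X Y D : ℝ → Ω → E}
    (hD : ∀ s ω, ‖D s ω‖ ≤ K)
    (hXY : ∀ᵐ ω ∂P, ∀ t ∈ Icc 0 T, X t ω - Y t ω = ∫ s in 0..t, D s ω) :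
    ∀ᵐ ω ∂P, ∀ t ∈ Icc 0 T, ‖X t ω - Y t ω‖ ≤ K * T := by
  filter_upwards [hXY] with ω hω t ht
  rw [hω t ht]
  refine (intervalIntegral.norm_integral_le_of_norm_le_const fun s _ => hD s ω).trans ?_
  rw [sub_zero, abs_of_nonneg ht.1]
  exact mul_le_mul_of_nonneg_left ht.2 ((norm_nonneg _).trans (hD 0 ω))

variable [IsProbabilityMeasure P] [MeasurableSpace E] [BorelSpace E] [SecondCountableTopology E]

theorem mckeanVlasov_pathwise_unique {b : Measure E → E → E} {B C T : ℝ}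
    (hb_bd : ∀ (μ : Measure E) [IsProbabilityMeasure μ] (x : E), ‖b μ x‖ ≤ B)
    (hb_lip : ∀ X Y : Ω → E, Measurable X → Measurable Y →
      Integrable (fun ω => ‖X ω - Y ω‖) P → ∀ x y,
        ‖b (P.map X) x - b (P.map Y) y‖ ≤ C * (‖x - y‖ + ∫ ω, ‖X ω - Y ω‖ ∂P))
    (hb_cont : ∀ X : ℝ → Ω → E, (∀ s, Measurable (X s)) → (∀ ω, Continuous fun s => X s ω) →
      ∀ ω, Continuous fun s => b (P.map (X s)) (X s ω))
    (hT : 0 ≤ T) {X Y N : ℝ → Ω → E} (hXm : ∀ s, Measurable (X s))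
    (hYm : ∀ s, Measurable (Y s)) (hXc : ∀ ω, Continuous fun t => X t ω)
    (hYc : ∀ ω, Continuous fun t => Y t ω) (hinit : ∀ᵐ ω ∂P, X 0 ω = Y 0 ω)
    (hX : ∀ᵐ ω ∂P, ∀ t ∈ Icc 0 T,
      X t ω = X 0 ω + (∫ s in 0..t, b (P.map (X s)) (X s ω)) + N t ω)
    (hY : ∀ᵐ ω ∂P, ∀ t ∈ Icc 0 T,
      Y t ω = Y 0 ω + (∫ s in 0..t, b (P.map (Y s)) (Y s ω)) + N t ω) :
    ∀ᵐ ω ∂P, ∀ t ∈ Icc 0 T, X t ω = Y t ω := by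
  have hB : 0 ≤ B := (norm_nonneg _).trans (hb_bd (Measure.dirac 0) 0)
  have hPX : ∀ s, IsProbabilityMeasure (P.map (X s)) :=
    fun s => Measure.isProbabilityMeasure_map (hXm s).aemeasurable
  have hPY : ∀ s, IsProbabilityMeasure (P.map (Y s)) :=
    fun s => Measure.isProbabilityMeasure_map (hYm s).aemeasurable
  have hdiff := ae_sub_eq_intervalIntegral_sub (hb_cont X hXm hXc) (hb_cont Y hYm hYc) hinit hX hY
  have hbd : ∀ᵐ ω ∂P, ∀ t ∈ Icc 0 T, ‖X t ω - Y t ω‖ ≤ 2 * B * T := by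
    simpa only [two_mul] using ae_norm_sub_le_of_sub_eq_intervalIntegral
      (fun s ω => (norm_sub_le _ _).trans (add_le_add (hb_bd _ _) (hb_bd _ _))) hdiff
  -- Truncating at the a.s. bound changes nothing on the good event and makes `Z` bounded.
  set Z := fun s ω => min ‖X s ω - Y s ω‖ (2 * B * T)
  have hZeq : ∀ᵐ ω ∂P, ∀ s ∈ Icc 0 T, Z s ω = ‖X s ω - Y s ω‖ :=
    hbd.mono fun ω h s hs => min_eq_left (h s hs)
  have hZm : ∀ s, Measurable (Z s) := fun s => ((hXm s).sub (hYm s)).norm.min measurable_const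
  have hZc : ∀ ω, Continuous fun s => Z s ω :=
    fun ω => ((hXc ω).sub (hYc ω)).norm.min continuous_const
  have hZ_le : ∀ s ω, ‖Z s ω‖ ≤ 2 * B * T := fun s ω => by
    rw [Real.norm_eq_abs, abs_of_nonneg (le_min (norm_nonneg _) (by positivity))]
    exact min_le_right _ _
  have hZmean : Continuous fun s => ∫ ω, Z s ω ∂P :=
    continuous_of_dominated (fun s => (hZm s).aestronglyMeasurable)
      (fun s => ae_of_all _ (hZ_le s)) (integrable_const _) (ae_of_all _ hZc)
  have hle : ∀ᵐ ω ∂P, ∀ t ∈ Icc 0 T,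
      Z t ω ≤ ∫ s in 0..t, C * (Z s ω + ∫ ω', Z s ω' ∂P) := by
    filter_upwards [hdiff, hZeq] with ω hω hZω t ht
    rw [hZω t ht, hω t ht]
    refine intervalIntegral.norm_integral_le_of_norm_le ht.1 (ae_of_all _ fun s hs => ?_)
      ((continuous_const.mul ((hZc ω).add hZmean)).intervalIntegrable _ _)
    have hs' : s ∈ Icc 0 T := ⟨hs.1.le, hs.2.trans ht.2⟩
    rw [hZω s hs', integral_congr_ae (hZeq.mono fun ω' h => h s hs')]
    exact hb_lip _ _ (hXm s) (hYm s) (.of_bound ((hXm s).sub (hYm s)).norm.aestronglyMeasurable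
      _ (hbd.mono fun ω' h => by simpa using h s hs')) _ _
  have hZ0 := ae_eq_zero_of_le_intervalIntegral_mean hZm hZc
    (fun s ω => le_min (norm_nonneg _) (by positivity)) (fun s ω => min_le_right _ _) hle
  refine ae_forall_Icc_eq_of_forall_ae_eq hXc hYc hT fun t ht => ?_
  filter_upwards [hZ0 t ht, hZeq] with ω h hω
  rw [hω t ht] at h
  exact sub_eq_zero.1 (norm_eq_zero.1 h)

end Processes

section ABF

variable {d : ℕ} {V : EuclideanSpace ℝ (Fin d) → ℝ} {φ : ℝ → ℝ} {α M G : ℝ} {Kφ KV : ℝ≥0}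

theorem EuclideanSpace.lipschitzWith_one_apply (i : Fin d) :
    LipschitzWith 1 fun z : EuclideanSpace ℝ (Fin d) => z i :=
  LipschitzWith.of_dist_le_mul fun z w => by simpa using PiLp.dist_apply_le z w i

theorem abs_fderiv_apply_single_le (hVG : ∀ x, ‖fderiv ℝ V x‖ ≤ G) (i : Fin d)
    (z : EuclideanSpace ℝ (Fin d)) : |fderiv ℝ V z (EuclideanSpace.single i 1)| ≤ G := by
  simpa [PiLp.norm_single] using
    ((fderiv ℝ V z).le_opNorm (EuclideanSpace.single i 1)).trans (by simpa using hVG z)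

theorem lipschitzWith_fderiv_apply_single (hV : LipschitzWith KV (fderiv ℝ V)) (i : Fin d) :
    LipschitzWith KV fun z => fderiv ℝ V z (EuclideanSpace.single i 1) :=
  LipschitzWith.of_dist_le_mul fun z w => by
    rw [Real.dist_eq, ← sub_apply]
    simpa [PiLp.norm_single, dist_eq_norm] using
      ((fderiv ℝ V z - fderiv ℝ V w).le_opNorm (EuclideanSpace.single i 1)).trans
        (by simpa [dist_eq_norm] using hV.dist_le_mul z w)

theorem norm_gradient_sub_le (hV : LipschitzWith KV (fderiv ℝ V))
    (x y : EuclideanSpace ℝ (Fin d)) : ‖gradient V x - gradient V y‖ ≤ KV * ‖x - y‖ := by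
  rw [gradient, gradient, ← map_sub, LinearIsometryEquiv.norm_map, ← dist_eq_norm,
    ← dist_eq_norm]
  exact hV.dist_le_mul x y

variable (hd : 0 < d)

noncomputable def abfDrift (V : EuclideanSpace ℝ (Fin d) → ℝ) (φ : ℝ → ℝ)
    (μ : Measure (EuclideanSpace ℝ (Fin d))) (x : EuclideanSpace ℝ (Fin d)) :
    EuclideanSpace ℝ (Fin d) :=
  -gradient V x + nwDrift hd V φ μ (x ⟨0, hd⟩) • EuclideanSpace.single ⟨0, hd⟩ (1 : ℝ)

theorem nwDrift_eq_nwAverage : nwDrift hd V φ = nwAverage φ (fun z => z ⟨0, hd⟩)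
    (fun z => fderiv ℝ V z (EuclideanSpace.single ⟨0, hd⟩ 1)) := rfl

include hd in
theorem norm_abfDrift_le (hφ : Continuous φ) (hα : 0 < α) (hφα : ∀ r, α ≤ φ r)
    (hφM : ∀ r, φ r ≤ M) (hVc : Continuous (fderiv ℝ V)) (hVG : ∀ x, ‖fderiv ℝ V x‖ ≤ G)
    (μ : Measure (EuclideanSpace ℝ (Fin d))) [IsProbabilityMeasure μ]
    (x : EuclideanSpace ℝ (Fin d)) : ‖abfDrift hd V φ μ x‖ ≤ 2 * G := by
  have hnw : |nwDrift hd V φ μ (x ⟨0, hd⟩)| ≤ G := by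
    rw [nwDrift_eq_nwAverage]
    exact abs_nwAverage_le μ hφ (EuclideanSpace.lipschitzWith_one_apply _).continuous
      (hVc.clm_apply continuous_const) hα hφα hφM
      (abs_fderiv_apply_single_le hVG _) _
  calc ‖abfDrift hd V φ μ x‖ ≤ ‖fderiv ℝ V x‖ + |nwDrift hd V φ μ (x ⟨0, hd⟩)| := by
        refine (norm_add_le _ _).trans_eq ?_
        rw [norm_neg, gradient, LinearIsometryEquiv.norm_map, norm_smul, PiLp.norm_single]
        simp
    _ ≤ 2 * G := by linarith [hVG x]

include hd in
theorem norm_abfDrift_map_sub_le {Ω : Type*} [MeasurableSpace Ω] {P : Measure Ω}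
    [IsProbabilityMeasure P] (hφ : LipschitzWith Kφ φ) (hα : 0 < α) (hφα : ∀ r, α ≤ φ r)
    (hφM : ∀ r, φ r ≤ M) (hV : LipschitzWith KV (fderiv ℝ V)) (hVG : ∀ x, ‖fderiv ℝ V x‖ ≤ G)
    {X Y : Ω → EuclideanSpace ℝ (Fin d)} (hX : Measurable X) (hY : Measurable Y)
    (hXY : Integrable (fun ω => ‖X ω - Y ω‖) P) (x y : EuclideanSpace ℝ (Fin d)) :
    ‖abfDrift hd V φ (P.map X) x - abfDrift hd V φ (P.map Y) y‖ ≤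
      (KV + (2 * G * Kφ + M * KV) / α) * (‖x - y‖ + ∫ ω, ‖X ω - Y ω‖ ∂P) := by
  have hnw := abs_nwAverage_map_sub_le hφ (EuclideanSpace.lipschitzWith_one_apply ⟨0, hd⟩)
    (lipschitzWith_fderiv_apply_single hV ⟨0, hd⟩) hα hφα hφM
    (abs_fderiv_apply_single_le hVG ⟨0, hd⟩)
    hX hY hXY (x ⟨0, hd⟩) (y ⟨0, hd⟩)
  rw [← nwDrift_eq_nwAverage] at hnw
  have hxy : |x ⟨0, hd⟩ - y ⟨0, hd⟩| ≤ ‖x - y‖ := by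
    simpa [← Real.dist_eq, ← dist_eq_norm] using
      (EuclideanSpace.lipschitzWith_one_apply ⟨0, hd⟩).dist_le_mul x y
  have hK : 0 ≤ (2 * G * Kφ + M * KV) / α := by
    have hG : 0 ≤ G := (norm_nonneg _).trans (hVG 0)
    have hM : 0 ≤ M := hα.le.trans ((hφα 0).trans (hφM 0))
    positivity
  calc _ = ‖(gradient V y - gradient V x) + (nwDrift hd V φ (P.map X) (x ⟨0, hd⟩) -
        nwDrift hd V φ (P.map Y) (y ⟨0, hd⟩)) • EuclideanSpace.single ⟨0, hd⟩ (1 : ℝ)‖ := by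
        rw [abfDrift, abfDrift, sub_smul]; congr 1; abel
    _ ≤ KV * ‖x - y‖ + (2 * G * Kφ + M * KV) / α * (‖x - y‖ + ∫ ω, ‖X ω - Y ω‖ ∂P) := by
        refine (norm_add_le _ _).trans (add_le_add ?_ ?_)
        · rw [norm_sub_rev]; exact norm_gradient_sub_le hV x y
        · rw [norm_smul, PiLp.norm_single, norm_one, mul_one, Real.norm_eq_abs]
          exact hnw.trans (by gcongr)
    _ ≤ _ := by
        have : 0 ≤ ∫ ω, ‖X ω - Y ω‖ ∂P := integral_nonneg fun ω => norm_nonneg _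
        nlinarith [mul_nonneg KV.coe_nonneg this]

include hd in
theorem continuous_abfDrift_map {Ω : Type*} [MeasurableSpace Ω] {P : Measure Ω}
    [IsProbabilityMeasure P] (hφ : Continuous φ) (hα : 0 < α) (hφα : ∀ r, α ≤ φ r)
    (hφM : ∀ r, φ r ≤ M) (hVc : Continuous (fderiv ℝ V)) (hVG : ∀ x, ‖fderiv ℝ V x‖ ≤ G)
    {X : ℝ → Ω → EuclideanSpace ℝ (Fin d)} (hXm : ∀ s, Measurable (X s))
    (hXc : ∀ ω, Continuous fun s => X s ω) (ω : Ω) :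
    Continuous fun s => abfDrift hd V φ (P.map (X s)) (X s ω) := by
  have hπ := (EuclideanSpace.lipschitzWith_one_apply ⟨0, hd⟩).continuous
  refine ((InnerProductSpace.toDual ℝ _).symm.continuous.comp (hVc.comp (hXc ω))).neg.add
    (Continuous.fun_smul ?_ continuous_const)
  exact continuous_nwAverage_map hφ hπ (hVc.clm_apply continuous_const) hα hφα hφM
    (abs_fderiv_apply_single_le hVG _) hXm hXc (hπ.comp (hXc ω))

end ABF

theorem stmt10_general (d : ℕ) (hd : 0 < d) (T : ℝ) (hT : 0 < T)
    (V : EuclideanSpace ℝ (Fin d) → ℝ) (hV : ContDiff ℝ 2 V)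
    (hVper : ∀ (x : EuclideanSpace ℝ (Fin d)) (q : Fin d → ℤ),
      V (x + (show EuclideanSpace ℝ (Fin d) from WithLp.toLp 2 (fun i => (q i : ℝ)))) = V x)
    (α : ℝ) (hα : 0 < α) (ψ : ℝ → ℝ) (hψ : ContDiff ℝ 1 ψ)
    (hψpos : ∀ x, 0 ≤ ψ x) (hψper : ∀ x, ψ (x + 1) = ψ x)
    {Ω : Type*} [m : MeasurableSpace Ω] (P : Measure Ω) [IsProbabilityMeasure P]
    (F : Filtration ℝ m) (W : ℝ → Ω → EuclideanSpace ℝ (Fin d))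
    (X Y : ℝ → Ω → EuclideanSpace ℝ (Fin d))
    (hXcont : ∀ ω, Continuous fun t => X t ω) (hXad : Adapted F X)
    (hYcont : ∀ ω, Continuous fun t => Y t ω) (hYad : Adapted F Y)
    (hinit : ∀ᵐ ω ∂P, X 0 ω = Y 0 ω)
    (hXeq : ∀ᵐ ω ∂P, ∀ t ∈ Set.Icc (0:ℝ) T,
      X t ω = X 0 ω +
        (∫ s in (0:ℝ)..t,
          (-gradient V (X s ω) +
            nwDrift hd V (fun r => α + ψ r) (P.map (X s)) (X s ω ⟨0, hd⟩) •
              EuclideanSpace.single ⟨0, hd⟩ (1:ℝ))) +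
        Real.sqrt 2 • W t ω)
    (hYeq : ∀ᵐ ω ∂P, ∀ t ∈ Set.Icc (0:ℝ) T,
      Y t ω = Y 0 ω +
        (∫ s in (0:ℝ)..t,
          (-gradient V (Y s ω) +
            nwDrift hd V (fun r => α + ψ r) (P.map (Y s)) (Y s ω ⟨0, hd⟩) •
              EuclideanSpace.single ⟨0, hd⟩ (1:ℝ))) +
        Real.sqrt 2 • W t ω) :
    ∀ᵐ ω ∂P, ∀ t ∈ Set.Icc (0:ℝ) T, X t ω = Y t ω := by
  have hφper : Function.Periodic (fun r => α + ψ r) 1 := fun r => by simp only [hψper]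
  have hφ : ContDiff ℝ 1 fun r => α + ψ r := contDiff_const.add hψ
  have hφα : ∀ r, α ≤ α + ψ r := fun r => le_add_of_nonneg_right (hψpos r)
  obtain ⟨M, hφM⟩ := hφper.exists_le_of_continuous one_ne_zero hφ.continuous
  obtain ⟨Kφ, hKφ⟩ := hφper.exists_lipschitzWith one_ne_zero hφ
  have hdVper : IsLatticePeriodic (fderiv ℝ V) := IsLatticePeriodic.fderiv hVper
  obtain ⟨G, hVG⟩ := hdVper.exists_norm_le (hV.continuous_fderiv two_ne_zero)
  obtain ⟨KV, hKV⟩ := hdVper.exists_lipschitzWith (hV.fderiv_right le_rfl)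
  have hmeas : ∀ Z : ℝ → Ω → EuclideanSpace ℝ (Fin d), Adapted F Z → ∀ s, Measurable (Z s) :=
    fun Z hZ s => (hZ s).mono (F.le s) le_rfl
  exact mckeanVlasov_pathwise_unique (b := abfDrift hd V fun r => α + ψ r)
    (N := fun t ω => Real.sqrt 2 • W t ω)
    (norm_abfDrift_le hd hφ.continuous hα hφα hφM hKV.continuous hVG)
    (fun _ _ hX hY hXY => norm_abfDrift_map_sub_le hd hKφ hα hφα hφM hKV hVG hX hY hXY)
    (fun _ hXm hXc =>
      continuous_abfDrift_map hd hφ.continuous hα hφα hφM hKV.continuous hVG hXm hXc)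
    hT.le (hmeas X hXad) (hmeas Y hYad) hXcont hYcont hinit hXeq hYeq

/-- Pathwise uniqueness for the regularized (mollified) ABF
McKean–Vlasov equation: with `V` of class `C²` and `ℤ^d`-periodic, `φ = α + ψ`
(`α > 0`, `ψ ≥ 0` of class `C¹`, `ℤ`-periodic with `∫_{[0,1)} ψ = 1`), two solutions
of `dX_t = (-∇V(X_t) + b_φ(Law(X_t), X_t¹) e₁) dt + √2 dW_t` on `[0,T]`, driven by
the same Brownian motion and with almost surely equal initial conditions, coincide
almost surely on `[0,T]`. -/
theorem stmt10 (d : ℕ) (hd : 0 < d) (T : ℝ) (hT : 0 < T)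
    (V : EuclideanSpace ℝ (Fin d) → ℝ) (hV : ContDiff ℝ 2 V)
    (hVper : ∀ (x : EuclideanSpace ℝ (Fin d)) (q : Fin d → ℤ),
      V (x + (show EuclideanSpace ℝ (Fin d) from WithLp.toLp 2 (fun i => (q i : ℝ)))) = V x)
    (α : ℝ) (hα : 0 < α) (ψ : ℝ → ℝ) (hψ : ContDiff ℝ 1 ψ)
    (hψpos : ∀ x, 0 ≤ ψ x) (hψper : ∀ x, ψ (x + 1) = ψ x)
    (hψint : ∫ x in Set.Ico (0:ℝ) 1, ψ x = 1)
    {Ω : Type*} [m : MeasurableSpace Ω] (P : Measure Ω) [IsProbabilityMeasure P]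
    (F : Filtration ℝ m) (W : ℝ → Ω → EuclideanSpace ℝ (Fin d))
    (hW : IsStdBrownian P F W)
    (X Y : ℝ → Ω → EuclideanSpace ℝ (Fin d))
    (hXcont : ∀ ω, Continuous fun t => X t ω) (hXad : Adapted F X)
    (hYcont : ∀ ω, Continuous fun t => Y t ω) (hYad : Adapted F Y)
    (hinit : ∀ᵐ ω ∂P, X 0 ω = Y 0 ω)
    (hXeq : ∀ᵐ ω ∂P, ∀ t ∈ Set.Icc (0:ℝ) T,
      X t ω = X 0 ω +
        (∫ s in (0:ℝ)..t,
          (-gradient V (X s ω) +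
            nwDrift hd V (fun r => α + ψ r) (P.map (X s)) (X s ω ⟨0, hd⟩) •
              EuclideanSpace.single ⟨0, hd⟩ (1:ℝ))) +
        Real.sqrt 2 • W t ω)
    (hYeq : ∀ᵐ ω ∂P, ∀ t ∈ Set.Icc (0:ℝ) T,
      Y t ω = Y 0 ω +
        (∫ s in (0:ℝ)..t,
          (-gradient V (Y s ω) +
            nwDrift hd V (fun r => α + ψ r) (P.map (Y s)) (Y s ω ⟨0, hd⟩) •
              EuclideanSpace.single ⟨0, hd⟩ (1:ℝ))) +
        Real.sqrt 2 • W t ω) :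
    ∀ᵐ ω ∂P, ∀ t ∈ Set.Icc (0:ℝ) T, X t ω = Y t ω :=
  stmt10_general d hd T hT V hV hVper α hα ψ hψ hψpos hψper (m := m) P F W X Y hXcont hXad hYcont
    hYad hinit hXeq hYeq
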